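/- Let X be a set and T an overlap-free subset of ⟨X⟩\{1}. Then the group of invertible elements (the group of units) of ⟨X : i(T)⟩ is a free group on T; more precisely, the homomorphism from the free group on the set T to the group of units of ⟨X : i(T)⟩ sending each generator t ∈ T to the image of t in ⟨X : i(T)⟩ is an isomorphism of groups. -/

import Mathlib

namespace AdjoinInverses

variable {X : Type*}

/-- The embedding of the free monoid on `X` into the free monoid on `X ⊕ S`. -/
def emb (S : Set (FreeMonoid X)) : FreeMonoid X →* FreeMonoid (X ⊕ S) :=
  FreeMonoid.map Sum.inl

/-- The generator `i(w)` corresponding to `w ∈ S`. -/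
def igen (S : Set (FreeMonoid X)) (w : S) : FreeMonoid (X ⊕ S) :=
  FreeMonoid.of (Sum.inr w)

/-- The defining relations `w ⬝ i(w) = 1` and `i(w) ⬝ w = 1` for `w ∈ S`. -/
inductive InvRel (S : Set (FreeMonoid X)) : FreeMonoid (X ⊕ S) → FreeMonoid (X ⊕ S) → Prop
  | mul_inv (w : S) : InvRel S (emb S w.1 * igen S w) 1
  | inv_mul (w : S) : InvRel S (igen S w * emb S w.1) 1

/-- The congruence generated by the defining relations. -/
def invCon (S : Set (FreeMonoid X)) : Con (FreeMonoid (X ⊕ S)) := conGen (InvRel S)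

/-- The monoid `⟨X : i(S)⟩` obtained from the free monoid on `X` by universally
adjoining a two-sided inverse to each element of `S`. -/
def AdjInv (S : Set (FreeMonoid X)) : Type _ := (invCon S).Quotient

instance (S : Set (FreeMonoid X)) : Monoid (AdjInv S) := Con.monoid _

/-- The natural homomorphism `⟨X⟩ → ⟨X : i(S)⟩`. -/
def natHom (S : Set (FreeMonoid X)) : FreeMonoid X →* AdjInv S :=
  ((invCon S).mk').comp (emb S)

/-- The adjoined inverse `i(w)`, as an element of `⟨X : i(S)⟩`. -/
def invElt (S : Set (FreeMonoid X)) (w : S) : AdjInv S :=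
  (invCon S).mk' (igen S w)

/-- `S` and `S'` are inverse-equivalent: each element of `S'` becomes invertible in
`⟨X : i(S)⟩` and each element of `S` becomes invertible in `⟨X : i(S')⟩`. -/
def InvEquiv (S S' : Set (FreeMonoid X)) : Prop :=
  (∀ w ∈ S', IsUnit (natHom S w)) ∧ ∀ w ∈ S, IsUnit (natHom S' w)

/-- Two (nonidentity) elements of the free monoid overlap: one can be written `a*b`
and the other `b*c` with `b ≠ 1` and at most one of `a`, `c` equal to `1`. -/
def Overlap (u v : FreeMonoid X) : Prop :=
  ∃ a b c : FreeMonoid X, b ≠ 1 ∧ (a ≠ 1 ∨ c ≠ 1) ∧ u = a * b ∧ v = b * c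

/-- A set `T` is overlap-free if no pair of elements of `T` (distinct or not) overlap. -/
def OverlapFree (T : Set (FreeMonoid X)) : Prop :=
  ∀ u ∈ T, ∀ v ∈ T, ¬ Overlap u v

/-!
Deleting a redex `t i(t)` or `i(t) t` is a length-decreasing rewriting system on words over
`X ⊕ T` whose equivalence closure is the defining congruence of `⟨X : i(T)⟩`. Overlap-freeness
makes the only critical pairs, `t i(t) t` and `i(t) t i(t)`, trivial, so every element has a
unique normal form. The image of a reduced free-group word is already a normal form, which gives
injectivity. For surjectivity, take normal forms `u`, `v` of a unit and its inverse: cancelling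
`u v` to `1` writes `u` as a product of letters `i(t)` and prefixes of elements of `T`, cancelling
`v u` writes it with suffixes instead, and overlap-freeness forces the blocks to be elements of `T`.
-/

open Relation

section Rewriting

variable {M : Type*} [Monoid M]

def CtxStep (r : M → M → Prop) (a b : M) : Prop :=
  ∃ x y u v, r u v ∧ a = x * u * y ∧ b = x * v * y

theorem eqvGen_ctxStep_mul {r : M → M → Prop} {a b : M} (h : EqvGen (CtxStep r) a b)
    (c d : M) : EqvGen (CtxStep r) (c * a * d) (c * b * d) := by
  induction h with
  | rel a b hab =>
    obtain ⟨x, y, u, v, huv, rfl, rfl⟩ := hab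
    exact .rel _ _ ⟨c * x, y * d, u, v, huv, by simp only [mul_assoc], by simp only [mul_assoc]⟩
  | refl => exact .refl _
  | symm _ _ _ ih => exact .symm _ _ ih
  | trans _ _ _ _ _ ih₁ ih₂ => exact .trans _ _ _ ih₁ ih₂

theorem conGen_iff_eqvGen_ctxStep {r : M → M → Prop} {a b : M} :
    conGen r a b ↔ EqvGen (CtxStep r) a b := by
  constructor
  · let c : Con M :=
      { r := EqvGen (CtxStep r)
        iseqv := EqvGen.is_equivalence _
        mul' := fun {a b c d} hab hcd => by
          have h₁ := eqvGen_ctxStep_mul hab 1 c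
          have h₂ := eqvGen_ctxStep_mul hcd b 1
          simp only [one_mul, mul_one] at h₁ h₂
          exact h₁.trans _ _ _ h₂ }
    exact fun h => (Con.conGen_le (c := c)).2
      (fun u v huv => .rel _ _ ⟨1, 1, u, v, huv, by simp, by simp⟩) h
  · intro h
    induction h with
    | rel a b hab =>
      obtain ⟨x, y, u, v, huv, rfl, rfl⟩ := hab
      exact ((conGen r).refl x |>.mul (ConGen.Rel.of _ _ huv)).mul ((conGen r).refl y)
    | refl => exact (conGen r).refl _
    | symm _ _ _ ih => exact (conGen r).symm ih
    | trans _ _ _ _ _ ih₁ ih₂ => exact (conGen r).trans ih₁ ih₂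

end Rewriting

section Words

variable {β : Type*}

def embList (w : FreeMonoid X) : List (X ⊕ β) := w.toList.map Sum.inl

@[simp] lemma embList_one : embList (1 : FreeMonoid X) = ([] : List (X ⊕ β)) := rfl

@[simp] lemma embList_mul (a b : FreeMonoid X) :
    (embList (a * b) : List (X ⊕ β)) = embList a ++ embList b :=
  List.map_append ..

@[simp] lemma embList_eq_nil {w : FreeMonoid X} : (embList w : List (X ⊕ β)) = [] ↔ w = 1 := by
  rw [embList, List.map_eq_nil_iff, ← FreeMonoid.toList_one, FreeMonoid.toList.apply_eq_iff_eq]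

@[simp] lemma inr_notMem_embList (w : FreeMonoid X) (b : β) :
    Sum.inr b ∉ (embList w : List (X ⊕ β)) := by
  simp [embList]

lemma embList_injective : Function.Injective (embList : FreeMonoid X → List (X ⊕ β)) :=
  (List.map_injective_iff.2 Sum.inl_injective).comp FreeMonoid.toList.injective

lemma exists_of_embList_eq_append {w : FreeMonoid X} {a b : List (X ⊕ β)} (h : embList w = a ++ b) :
    ∃ w₁ w₂, w = w₁ * w₂ ∧ a = embList w₁ ∧ b = embList w₂ := by
  obtain ⟨l₁, l₂, hl, rfl, rfl⟩ := List.map_eq_append_iff.1 h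
  exact ⟨FreeMonoid.ofList l₁, FreeMonoid.ofList l₂, FreeMonoid.toList.injective hl, rfl, rfl⟩

lemma embList_append_eq_embList_append {p s : FreeMonoid X} {u v : List (X ⊕ β)}
    (h : embList p ++ u = embList s ++ v) :
    (∃ c, s = p * c ∧ u = embList c ++ v) ∨ (∃ c, p = s * c ∧ v = embList c ++ u) := by
  rcases List.append_eq_append_iff.1 h with ⟨a, hs, rfl⟩ | ⟨a, hp, rfl⟩
  · obtain ⟨p', c, rfl, hp', rfl⟩ := exists_of_embList_eq_append hs
    exact .inl ⟨c, by rw [embList_injective hp'], rfl⟩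
  · obtain ⟨s', c, rfl, hs', rfl⟩ := exists_of_embList_eq_append hp
    exact .inr ⟨c, by rw [embList_injective hs'], rfl⟩

lemma append_embList_eq_append_embList {p s : FreeMonoid X} {u v : List (X ⊕ β)}
    (h : u ++ embList p = v ++ embList s) : (∃ c, p = c * s) ∨ (∃ c, s = c * p) := by
  rcases List.append_eq_append_iff.1 h with ⟨a, rfl, hs⟩ | ⟨a, rfl, hp⟩
  · obtain ⟨c, s', rfl, rfl, hs'⟩ := exists_of_embList_eq_append hs
    exact .inl ⟨c, by rw [embList_injective hs']⟩
  · obtain ⟨c, p', rfl, rfl, hp'⟩ := exists_of_embList_eq_append hp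
    exact .inr ⟨c, by rw [embList_injective hp']⟩

lemma embList_append_eq_inr_cons {w : FreeMonoid X} {u v : List (X ⊕ β)} {b : β}
    (h : embList w ++ u = Sum.inr b :: v) : w = 1 ∧ u = Sum.inr b :: v := by
  rcases List.append_eq_cons_iff.1 h with ⟨hw, rfl⟩ | ⟨a, hw, -⟩
  · exact ⟨embList_eq_nil.1 hw, rfl⟩
  · exact absurd (hw ▸ List.mem_cons_self) (inr_notMem_embList w b)

lemma embList_append_inr_cons_inj {w w' : FreeMonoid X} {b b' : β} {u u' : List (X ⊕ β)}
    (h : embList w ++ Sum.inr b :: u = embList w' ++ Sum.inr b' :: u') :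
    w = w' ∧ b = b' ∧ u = u' := by
  rcases embList_append_eq_embList_append h with ⟨c, rfl, hc⟩ | ⟨c, rfl, hc⟩
  · obtain ⟨rfl, hc⟩ := embList_append_eq_inr_cons hc.symm
    simp_all
  · obtain ⟨rfl, hc⟩ := embList_append_eq_inr_cons hc.symm
    simp_all

lemma exists_of_append_eq_embList_append_singleton {m b : List (X ⊕ β)} {w : FreeMonoid X}
    {y : β} (hb : b ≠ []) (h : m ++ b = embList w ++ [Sum.inr y]) :
    ∃ w₁ w₂, w = w₁ * w₂ ∧ m = embList w₁ ∧ b = embList w₂ ++ [Sum.inr y] := by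
  rcases List.append_eq_append_iff.1 h with ⟨a, hw, rfl⟩ | ⟨a, rfl, ha⟩
  · obtain ⟨w₁, w₂, rfl, rfl, rfl⟩ := exists_of_embList_eq_append hw
    exact ⟨w₁, w₂, rfl, rfl, rfl⟩
  · obtain ⟨rfl, rfl⟩ : a = [] ∧ b = [Sum.inr y] := by
      simpa [hb] using List.append_eq_singleton_iff.1 ha.symm
    exact ⟨w, 1, by simp, by simp, by simp⟩

lemma exists_of_append_eq_inr_cons_embList {m b : List (X ⊕ β)} {w : FreeMonoid X}
    {y : β} (hm : m ≠ []) (h : m ++ b = Sum.inr y :: embList w) :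
    ∃ w₁ w₂, w = w₁ * w₂ ∧ m = Sum.inr y :: embList w₁ ∧ b = embList w₂ := by
  obtain ⟨m', rfl, hw⟩ := (List.append_eq_cons_iff.1 h).resolve_left (fun h => hm h.1)
  obtain ⟨w₁, w₂, rfl, rfl, rfl⟩ := exists_of_embList_eq_append hw
  exact ⟨w₁, w₂, rfl, rfl, rfl⟩

lemma eq_one_of_append_embList_eq_append_inr {p q : List (X ⊕ β)} {w : FreeMonoid X} {y : β}
    (h : p ++ embList w = q ++ [Sum.inr y]) : w = 1 := by
  rcases List.append_eq_append_iff.1 h with ⟨a, -, hw⟩ | ⟨a, -, ha⟩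
  · exact absurd (hw ▸ by simp) (inr_notMem_embList w y)
  · rcases List.append_eq_singleton_iff.1 ha.symm with ⟨-, hw⟩ | ⟨-, hw⟩
    · exact absurd (hw ▸ List.mem_singleton_self _) (inr_notMem_embList w y)
    · exact embList_eq_nil.1 hw

end Words

section OverlapFree

variable {T : Set (FreeMonoid X)}

lemma OverlapFree.eq_one_of_overlap (hT : OverlapFree T) {s t a b c : FreeMonoid X}
    (hs : s ∈ T) (ht : t ∈ T) (hb : b ≠ 1) (h₁ : s = a * b) (h₂ : t = b * c) :
    a = 1 ∧ c = 1 := by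
  by_contra h
  exact hT s hs t ht ⟨a, b, c, hb, by tauto, h₁, h₂⟩

lemma OverlapFree.eq_one_of_mul_mem_right (h1 : (1 : FreeMonoid X) ∉ T) (hT : OverlapFree T)
    {t c : FreeMonoid X} (ht : t ∈ T) (htc : t * c ∈ T) : c = 1 :=
  (hT.eq_one_of_overlap ht htc (ne_of_mem_of_not_mem ht h1) (one_mul t).symm rfl).2

lemma OverlapFree.eq_one_of_mul_mem_left (h1 : (1 : FreeMonoid X) ∉ T) (hT : OverlapFree T)
    {t c : FreeMonoid X} (ht : t ∈ T) (hct : c * t ∈ T) : c = 1 :=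
  (hT.eq_one_of_overlap hct ht (ne_of_mem_of_not_mem ht h1) rfl (mul_one t).symm).1

end OverlapFree

section NormalForms

variable {T : Set (FreeMonoid X)}

variable (T) in
inductive IsRedex : List (X ⊕ T) → Prop
  | mul_inv (t : T) : IsRedex (embList t.1 ++ [Sum.inr t])
  | inv_mul (t : T) : IsRedex (Sum.inr t :: embList t.1)

variable (T) in
def Step (a b : List (X ⊕ T)) : Prop :=
  ∃ l r R, IsRedex T R ∧ a = l ++ R ++ r ∧ b = l ++ r

lemma ctxStep_invRel_iff {a b : List (X ⊕ T)} :
    CtxStep (InvRel T) (FreeMonoid.ofList a) (FreeMonoid.ofList b) ↔ Step T a b := by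
  constructor
  · rintro ⟨x, y, u, v, huv, ha, hb⟩
    cases huv <;> exact ⟨x.toList, y.toList, _, by constructor, congrArg FreeMonoid.toList ha,
      by simpa using congrArg FreeMonoid.toList hb⟩
  · rintro ⟨l, r, R, hR, rfl, rfl⟩
    cases hR <;> exact ⟨.ofList l, .ofList r, _, 1, by constructor, rfl, by rw [mul_one]; rfl⟩

lemma IsRedex.ne_nil {R : List (X ⊕ T)} (hR : IsRedex T R) : R ≠ [] := by
  cases hR <;> simp

lemma Step.length_lt {a b : List (X ⊕ T)} (h : Step T a b) : b.length < a.length := by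
  obtain ⟨l, r, R, hR, rfl, rfl⟩ := h
  have := List.length_pos_iff.2 hR.ne_nil
  simp only [List.length_append]
  omega

/-- The only genuine overlaps of redexes are `t i(t) t` and `i(t) t i(t)`, where either deletion
leaves the same word. -/
lemma IsRedex.eq_of_overlap (h1 : (1 : FreeMonoid X) ∉ T) (hT : OverlapFree T)
    {R₁ R₂ m b r₁ r₂ : List (X ⊕ T)} (hR₁ : IsRedex T R₁) (hR₂ : IsRedex T R₂) (hb : b ≠ [])
    (h₁ : R₁ = m ++ b) (h₂ : R₂ ++ r₂ = b ++ r₁) : r₁ = m ++ r₂ := by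
  cases hR₁ with
  | mul_inv t =>
    obtain ⟨a, t₀, ht, rfl, rfl⟩ := exists_of_append_eq_embList_append_singleton hb h₁.symm
    cases hR₂ with
    | mul_inv t' =>
      obtain ⟨rfl, rfl, rfl⟩ := embList_append_inr_cons_inj (by simpa using h₂)
      obtain rfl : a = 1 := by simpa using ht
      simp
    | inv_mul t' =>
      obtain ⟨rfl, rfl, rfl⟩ := embList_append_inr_cons_inj (w := 1) (w' := t₀)
        (u := embList t'.1 ++ r₂) (u' := r₁) (by simpa using h₂)
      simp [ht]
  | inv_mul t =>
    rcases eq_or_ne m [] with rfl | hm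
    · rw [List.nil_append] at h₁
      subst h₁
      cases hR₂ with
      | mul_inv t' =>
        exact absurd (embList_append_eq_inr_cons (by simpa using h₂)).1
          (ne_of_mem_of_not_mem t'.2 h1)
      | inv_mul t' =>
        simp only [List.cons_append, List.cons.injEq, Sum.inr.injEq] at h₂
        obtain ⟨rfl, h₂⟩ := h₂
        exact (List.append_cancel_left h₂).symm
    obtain ⟨a, t₀, ht, rfl, rfl⟩ := exists_of_append_eq_inr_cons_embList hm h₁.symm
    have ht₀ : t₀ ≠ 1 := by simpa using hb
    cases hR₂ with
    | inv_mul t' => exact absurd (embList_append_eq_inr_cons h₂.symm).1 ht₀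
    | mul_inv t' =>
      obtain ⟨c, hc, rfl⟩ : ∃ c, t'.1 = t₀ * c ∧ r₁ = embList c ++ Sum.inr t' :: r₂ := by
        rcases embList_append_eq_embList_append (u := Sum.inr t' :: r₂) (by simpa using h₂) with
          ⟨c, hc, hr⟩ | hc
        · obtain ⟨rfl, rfl⟩ := embList_append_eq_inr_cons hr.symm
          exact ⟨1, by simp [hc], by simp⟩
        · exact hc
      obtain ⟨rfl, rfl⟩ := hT.eq_one_of_overlap t.2 t'.2 ht₀ ht hc
      obtain rfl : t = t' := Subtype.ext (by simp [ht, hc])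
      simp

theorem Step.diamond (h1 : (1 : FreeMonoid X) ∉ T) (hT : OverlapFree T)
    {z z₁ z₂ : List (X ⊕ T)} (h₁ : Step T z z₁) (h₂ : Step T z z₂) :
    z₁ = z₂ ∨ ∃ d, Step T z₁ d ∧ Step T z₂ d := by
  obtain ⟨l₁, r₁, R₁, hR₁, rfl, rfl⟩ := h₁
  obtain ⟨l₂, r₂, R₂, hR₂, he, rfl⟩ := h₂
  wlog hl : ∃ m, l₂ = l₁ ++ m generalizing l₁ l₂ r₁ r₂ R₁ R₂
  · obtain ⟨m, rfl⟩ : ∃ m, l₁ = l₂ ++ m := by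
      rcases List.append_eq_append_iff.1 (by simpa using he : l₁ ++ (R₁ ++ r₁) = l₂ ++ (R₂ ++ r₂))
        with ⟨m, rfl, -⟩ | ⟨m, rfl, -⟩
      exacts [absurd ⟨m, rfl⟩ hl, ⟨m, rfl⟩]
    exact (this _ _ _ hR₂ _ _ _ hR₁ he.symm ⟨m, rfl⟩).imp Eq.symm fun ⟨d, h, h'⟩ => ⟨d, h', h⟩
  obtain ⟨m, rfl⟩ := hl
  have commute (a : List (X ⊕ T)) (hm : m = R₁ ++ a) (hr : r₁ = a ++ R₂ ++ r₂) :
      ∃ d, Step T (l₁ ++ r₁) d ∧ Step T (l₁ ++ m ++ r₂) d :=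
    ⟨l₁ ++ a ++ r₂, ⟨l₁ ++ a, r₂, R₂, hR₂, by simp [hr], by simp⟩,
      ⟨l₁, a ++ r₂, R₁, hR₁, by simp [hm], by simp⟩⟩
  rcases List.append_eq_append_iff.1 (by simpa using he : R₁ ++ r₁ = m ++ (R₂ ++ r₂)) with
    ⟨a, hm, hr⟩ | ⟨b, hR₁b, hb⟩
  · exact .inr (commute a hm (by simp [hr]))
  rcases eq_or_ne b [] with rfl | hb₀
  · exact .inr (commute [] (by simpa using hR₁b.symm) (by simpa using hb.symm))
  · left
    simp [IsRedex.eq_of_overlap h1 hT hR₁ hR₂ hb₀ hR₁b hb]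

theorem Step.join_of_eqvGen (h1 : (1 : FreeMonoid X) ∉ T) (hT : OverlapFree T)
    {a b : List (X ⊕ T)} (h : EqvGen (Step T) a b) : Join (ReflTransGen (Step T)) a b := by
  have hconfl := equivalence_join_reflTransGen fun a b c (hb : Step T a b) hc =>
    (Step.diamond h1 hT hb hc).elim (fun h => ⟨c, h ▸ .refl, .refl⟩)
      fun ⟨d, hbd, hcd⟩ => ⟨d, .single hbd, .single hcd⟩
  exact hconfl.eqvGen_iff.1 (h.mono fun a b hab => ⟨b, .single hab, .refl⟩)

variable (T) in
def IsNormalForm (z : List (X ⊕ T)) : Prop := ∀ z', ¬ Step T z z'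

lemma isNormalForm_nil : IsNormalForm T [] := by
  rintro z ⟨l, r, R, hR, h, -⟩
  exact hR.ne_nil (List.append_eq_nil_iff.1 (List.append_eq_nil_iff.1 h.symm).1).2

lemma IsNormalForm.infix {z z' : List (X ⊕ T)} (h : IsNormalForm T z') (hz : z <:+: z') :
    IsNormalForm T z := by
  obtain ⟨p, q, rfl⟩ := hz
  rintro _ ⟨l, r, R, hR, rfl, rfl⟩
  exact h (p ++ l ++ (r ++ q)) ⟨p ++ l, r ++ q, R, hR, by simp, by simp⟩

lemma IsNormalForm.eq_of_eqvGen (h1 : (1 : FreeMonoid X) ∉ T) (hT : OverlapFree T)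
    {a b : List (X ⊕ T)} (ha : IsNormalForm T a) (hb : IsNormalForm T b)
    (h : EqvGen (Step T) a b) : a = b := by
  obtain ⟨c, hac, hbc⟩ := Step.join_of_eqvGen h1 hT h
  rw [← (reflTransGen_iff_eq ha).1 hac, ← (reflTransGen_iff_eq hb).1 hbc]

lemma exists_isNormalForm (z : List (X ⊕ T)) :
    ∃ u, IsNormalForm T u ∧ ReflTransGen (Step T) z u := by
  by_cases h : IsNormalForm T z
  · exact ⟨z, h, .refl⟩
  · obtain ⟨z', hz'⟩ := not_forall_not.1 h
    have := hz'.length_lt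
    obtain ⟨u, hu, hz'u⟩ := exists_isNormalForm z'
    exact ⟨u, hu, .head hz' hz'u⟩
termination_by z.length

end NormalForms

section Units

variable {T : Set (FreeMonoid X)}

variable (T) in
def ofWord (z : List (X ⊕ T)) : AdjInv T := (invCon T).mk' (FreeMonoid.ofList z)

lemma ofWord_append (a b : List (X ⊕ T)) : ofWord T (a ++ b) = ofWord T a * ofWord T b :=
  map_mul (invCon T).mk' _ _

@[simp] lemma ofWord_nil : ofWord T [] = 1 := map_one (invCon T).mk'

lemma ofWord_eq_ofWord_iff {a b : List (X ⊕ T)} :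
    ofWord T a = ofWord T b ↔ EqvGen (Step T) a b := by
  have hstep : CtxStep (InvRel T) = fun x y => Step T x.toList y.toList := by
    ext x y
    exact ctxStep_invRel_iff
  refine (Con.eq _).trans ?_
  rw [invCon, conGen_iff_eqvGen_ctxStep, hstep]
  rfl

lemma natHom_mul_invElt (t : T) : natHom T t.1 * invElt T t = 1 :=
  (Con.eq _).2 (ConGen.Rel.of _ _ (InvRel.mul_inv t))

lemma invElt_mul_natHom (t : T) : invElt T t * natHom T t.1 = 1 :=
  (Con.eq _).2 (ConGen.Rel.of _ _ (InvRel.inv_mul t))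

variable (T) in
def toUnits : FreeGroup T →* (AdjInv T)ˣ :=
  FreeGroup.lift fun t => ⟨natHom T t.1, invElt T t, natHom_mul_invElt t, invElt_mul_natHom t⟩

variable (T) in
def letterWord : T × Bool → List (X ⊕ T)
  | (t, true) => embList t.1
  | (t, false) => [Sum.inr t]

variable (T) in
def imageWord (L : List (T × Bool)) : List (X ⊕ T) := L.flatMap (letterWord T)

@[simp] lemma imageWord_nil : imageWord T [] = [] := rfl

@[simp] lemma imageWord_cons (x : T × Bool) (L : List (T × Bool)) :
    imageWord T (x :: L) = letterWord T x ++ imageWord T L := rfl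

@[simp] lemma imageWord_append (L L' : List (T × Bool)) :
    imageWord T (L ++ L') = imageWord T L ++ imageWord T L' := List.flatMap_append

lemma val_toUnits_mk (L : List (T × Bool)) :
    (toUnits T (FreeGroup.mk L) : AdjInv T) = ofWord T (imageWord T L) := by
  rw [toUnits, FreeGroup.lift_mk]
  induction L with
  | nil => rfl
  | cons x L ih =>
    obtain ⟨t, _ | _⟩ := x <;>
    simp only [List.map_cons, List.prod_cons, Units.val_mul, ih, imageWord_cons, ofWord_append] <;>
    rfl

lemma exists_of_imageWord_eq_append_inr_cons {L : List (T × Bool)} {p q : List (X ⊕ T)} {t : T}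
    (h : imageWord T L = p ++ Sum.inr t :: q) :
    ∃ L₁ L₂, L = L₁ ++ (t, false) :: L₂ ∧ imageWord T L₁ = p ∧ imageWord T L₂ = q := by
  induction L generalizing p with
  | nil => simp at h
  | cons x L ih =>
    obtain ⟨s, _ | _⟩ := x <;> simp only [imageWord_cons, letterWord, List.singleton_append] at h
    · rcases List.cons_eq_append_iff.1 h with ⟨rfl, h⟩ | ⟨p', rfl, hp'⟩
      · obtain ⟨rfl, rfl⟩ : t = s ∧ q = imageWord T L := by simpa [eq_comm] using h
        exact ⟨[], L, rfl, rfl, rfl⟩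
      · obtain ⟨L₁, L₂, rfl, rfl, rfl⟩ := ih hp'
        exact ⟨(s, false) :: L₁, L₂, rfl, rfl, rfl⟩
    · obtain ⟨p', rfl, hp'⟩ :
          ∃ p', p = embList s.1 ++ p' ∧ imageWord T L = p' ++ Sum.inr t :: q := by
        rcases List.append_eq_append_iff.1 h.symm with ⟨_ | ⟨y, a⟩, hs, ha⟩ | ⟨a, hp, ha⟩
        · exact ⟨[], by rw [hs, List.append_nil, List.append_nil], ha.symm⟩
        · simp only [List.cons_append, List.cons.injEq] at ha
          exact absurd (hs ▸ by simp [ha.1]) (inr_notMem_embList s.1 t)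
        · exact ⟨a, hp, ha⟩
      obtain ⟨L₁, L₂, rfl, rfl, rfl⟩ := ih hp'
      exact ⟨(s, true) :: L₁, L₂, rfl, rfl, rfl⟩

lemma imageWord_eq_nil (h1 : (1 : FreeMonoid X) ∉ T) {L : List (T × Bool)} :
    imageWord T L = [] ↔ L = [] := by
  have ne_nil : ∀ x : T × Bool, letterWord T x ≠ []
    | (t, true) => by simpa [letterWord] using ne_of_mem_of_not_mem t.2 h1
    | (t, false) => by simp [letterWord]
  rw [imageWord, List.flatMap_eq_nil_iff, List.eq_nil_iff_forall_not_mem]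
  exact ⟨fun h x hx => ne_nil x (h x hx), fun h x hx => absurd hx (h x)⟩

lemma eq_cons_of_imageWord_eq_embList_append (h1 : (1 : FreeMonoid X) ∉ T) (hT : OverlapFree T)
    {L : List (T × Bool)} {t : T} {q : List (X ⊕ T)} (h : imageWord T L = embList t.1 ++ q) :
    ∃ L', L = (t, true) :: L' := by
  have ht : t.1 ≠ 1 := ne_of_mem_of_not_mem t.2 h1
  obtain _ | ⟨⟨s, _ | _⟩, L'⟩ := L <;> simp only [imageWord_nil, imageWord_cons, letterWord,
    List.singleton_append] at h
  · exact absurd (embList_eq_nil.1 (List.append_eq_nil_iff.1 h.symm).1) ht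
  · exact absurd (embList_append_eq_inr_cons h.symm).1 ht
  · obtain rfl : s = t := by
      rcases embList_append_eq_embList_append h with ⟨c, hc, -⟩ | ⟨c, hc, -⟩
      · obtain rfl := hT.eq_one_of_mul_mem_right h1 s.2 (hc ▸ t.2)
        exact Subtype.ext (by simpa using hc.symm)
      · obtain rfl := hT.eq_one_of_mul_mem_right h1 t.2 (hc ▸ s.2)
        exact Subtype.ext (by simpa using hc)
    exact ⟨L', rfl⟩

lemma eq_append_of_imageWord_eq_append_embList (h1 : (1 : FreeMonoid X) ∉ T)
    (hT : OverlapFree T) {L : List (T × Bool)} {t : T} {p : List (X ⊕ T)}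
    (h : imageWord T L = p ++ embList t.1) : ∃ L', L = L' ++ [(t, true)] := by
  have ht : t.1 ≠ 1 := ne_of_mem_of_not_mem t.2 h1
  rcases List.eq_nil_or_concat' L with rfl | ⟨L', ⟨s, _ | _⟩, rfl⟩ <;>
    simp only [imageWord_nil, imageWord_append, imageWord_cons, letterWord, List.append_nil] at h
  · exact absurd (embList_eq_nil.1 (List.append_eq_nil_iff.1 h.symm).2) ht
  · exact absurd (eq_one_of_append_embList_eq_append_inr h.symm) ht
  · obtain rfl : s = t := by
      rcases append_embList_eq_append_embList h with ⟨c, hc⟩ | ⟨c, hc⟩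
      · obtain rfl := hT.eq_one_of_mul_mem_left h1 t.2 (hc ▸ s.2)
        exact Subtype.ext (by simpa using hc)
      · obtain rfl := hT.eq_one_of_mul_mem_left h1 s.2 (hc ▸ t.2)
        exact Subtype.ext (by simpa using hc.symm)
    exact ⟨L', rfl⟩

/-- A redex inside the image of a free-group word has its letter `i(t)` next to a block `t`,
which by overlap-freeness can only come from an adjacent letter `t`, cancelling against `t⁻¹`. -/
lemma isNormalForm_imageWord (h1 : (1 : FreeMonoid X) ∉ T) (hT : OverlapFree T)
    {L : List (T × Bool)} (hL : FreeGroup.IsReduced L) : IsNormalForm T (imageWord T L) := by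
  rintro _ ⟨l, r, R, hR, he, rfl⟩
  cases hR with
  | mul_inv t =>
    obtain ⟨L₁, L₂, rfl, hL₁, -⟩ :=
      exists_of_imageWord_eq_append_inr_cons (p := l ++ embList t.1) (q := r) (by simpa using he)
    obtain ⟨L₀, rfl⟩ := eq_append_of_imageWord_eq_append_embList h1 hT hL₁
    exact hL.not_step
      (by simpa using FreeGroup.Red.Step.not (L₁ := L₀) (L₂ := L₂) (x := t) (b := true))
  | inv_mul t =>
    obtain ⟨L₁, L₂, rfl, -, hL₂⟩ :=
      exists_of_imageWord_eq_append_inr_cons (p := l) (q := embList t.1 ++ r) (by simpa using he)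
    obtain ⟨L₀, rfl⟩ := eq_cons_of_imageWord_eq_embList_append h1 hT hL₂
    exact hL.not_step (FreeGroup.Red.Step.not (L₁ := L₁) (L₂ := L₀) (x := t) (b := false))

theorem toUnits_injective (h1 : (1 : FreeMonoid X) ∉ T) (hT : OverlapFree T) :
    Function.Injective (toUnits T) := by
  classical
  refine (injective_iff_map_eq_one _).2 fun g hg => ?_
  have hw : ofWord T (imageWord T g.toWord) = ofWord T [] := by
    rw [← val_toUnits_mk, FreeGroup.mk_toWord, hg, Units.val_one, ofWord_nil]
  have := (isNormalForm_imageWord h1 hT FreeGroup.isReduced_toWord).eq_of_eqvGen h1 hT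
    isNormalForm_nil (ofWord_eq_ofWord_iff.1 hw)
  exact FreeGroup.toWord_eq_nil_iff.1 ((imageWord_eq_nil h1).1 this)

end Units

section Surjectivity

variable {T : Set (FreeMonoid X)}

variable (T) in
inductive IsPrefixProduct : List (X ⊕ T) → Prop
  | nil : IsPrefixProduct []
  | inr (t : T) {u : List (X ⊕ T)} : IsPrefixProduct u → IsPrefixProduct (Sum.inr t :: u)
  | embList_append (t : T) {p q : FreeMonoid X} (hp : p ≠ 1) (hpq : p * q = t.1)
      {u : List (X ⊕ T)} : IsPrefixProduct u → IsPrefixProduct (embList p ++ u)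

variable (T) in
inductive IsSuffixProduct : List (X ⊕ T) → Prop
  | nil : IsSuffixProduct []
  | inr (t : T) {u : List (X ⊕ T)} : IsSuffixProduct u → IsSuffixProduct (Sum.inr t :: u)
  | embList_append (t : T) {q s : FreeMonoid X} (hs : s ≠ 1) (hqs : q * s = t.1)
      {u : List (X ⊕ T)} : IsSuffixProduct u → IsSuffixProduct (embList s ++ u)

lemma IsPrefixProduct.append {u v : List (X ⊕ T)} (hu : IsPrefixProduct T u)
    (hv : IsPrefixProduct T v) : IsPrefixProduct T (u ++ v) := by
  induction hu with
  | nil => exact hv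
  | inr t _ ih => exact .inr t ih
  | embList_append t hp hpq _ ih => simpa using ih.embList_append t hp hpq

lemma IsSuffixProduct.append {u v : List (X ⊕ T)} (hu : IsSuffixProduct T u)
    (hv : IsSuffixProduct T v) : IsSuffixProduct T (u ++ v) := by
  induction hu with
  | nil => exact hv
  | inr t _ ih => exact .inr t ih
  | embList_append t hs hqs _ ih => simpa using ih.embList_append t hs hqs

lemma IsPrefixProduct.embList_append' {t : T} {p q : FreeMonoid X} (hpq : p * q = t.1)
    {u : List (X ⊕ T)} (hu : IsPrefixProduct T u) : IsPrefixProduct T (embList p ++ u) := by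
  rcases eq_or_ne p 1 with rfl | hp
  · simpa using hu
  · exact hu.embList_append t hp hpq

lemma IsSuffixProduct.embList_append' {t : T} {q s : FreeMonoid X} (hqs : q * s = t.1)
    {u : List (X ⊕ T)} (hu : IsSuffixProduct T u) : IsSuffixProduct T (embList s ++ u) := by
  rcases eq_or_ne s 1 with rfl | hs
  · simpa using hu
  · exact hu.embList_append t hs hqs

lemma IsRedex.isPrefixProduct_left {m b : List (X ⊕ T)} (hR : IsRedex T (m ++ b)) :
    IsPrefixProduct T m := by
  generalize hR' : m ++ b = R at hR
  cases hR with
  | mul_inv t =>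
    rcases List.append_eq_append_iff.1 hR' with ⟨a, ht, -⟩ | ⟨a, rfl, ha⟩
    · obtain ⟨p, q, hpq, rfl, -⟩ := exists_of_embList_eq_append ht
      simpa using IsPrefixProduct.nil.embList_append' hpq.symm
    · rcases List.append_eq_singleton_iff.1 ha.symm with ⟨rfl, -⟩ | ⟨rfl, -⟩
      · simpa using IsPrefixProduct.nil.embList_append' (mul_one t.1)
      · exact (IsPrefixProduct.nil.inr t).embList_append' (mul_one t.1)
  | inv_mul t =>
    rcases List.append_eq_cons_iff.1 hR' with ⟨rfl, -⟩ | ⟨m', rfl, ht⟩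
    · exact .nil
    · obtain ⟨p, q, hpq, rfl, -⟩ := exists_of_embList_eq_append ht
      simpa using (IsPrefixProduct.nil.embList_append' hpq.symm).inr t

lemma IsRedex.isSuffixProduct_right {m b : List (X ⊕ T)} (hR : IsRedex T (m ++ b)) :
    IsSuffixProduct T b := by
  generalize hR' : m ++ b = R at hR
  cases hR with
  | mul_inv t =>
    rcases List.append_eq_append_iff.1 hR' with ⟨a, ht, rfl⟩ | ⟨a, -, ha⟩
    · obtain ⟨q, s, hqs, -, rfl⟩ := exists_of_embList_eq_append ht
      exact (IsSuffixProduct.nil.inr t).embList_append' hqs.symm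
    · rcases List.append_eq_singleton_iff.1 ha.symm with ⟨-, rfl⟩ | ⟨-, rfl⟩
      · exact IsSuffixProduct.nil.inr t
      · exact .nil
  | inv_mul t =>
    rcases List.append_eq_cons_iff.1 hR' with ⟨-, rfl⟩ | ⟨m', -, ht⟩
    · simpa using (IsSuffixProduct.nil.embList_append' (one_mul t.1)).inr t
    · obtain ⟨q, s, hqs, -, rfl⟩ := exists_of_embList_eq_append ht
      simpa using IsSuffixProduct.nil.embList_append' hqs.symm

lemma IsNormalForm.not_infix {z R : List (X ⊕ T)} (hz : IsNormalForm T z) (hR : IsRedex T R) :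
    ¬ R <:+: z :=
  fun ⟨l, r, h⟩ => hz (l ++ r) ⟨l, r, R, hR, h.symm, rfl⟩

lemma exists_straddling_redex {u v z : List (X ⊕ T)} (hu : IsNormalForm T u)
    (hv : IsNormalForm T v) (h : Step T (u ++ v) z) :
    ∃ l m b r, IsRedex T (m ++ b) ∧ u = l ++ m ∧ v = b ++ r ∧ z = l ++ r := by
  obtain ⟨l, r, R, hR, he, rfl⟩ := h
  rcases List.append_eq_append_iff.1 (by simpa using he.symm : l ++ (R ++ r) = u ++ v) with
    ⟨a, rfl, ha⟩ | ⟨a, rfl, ha⟩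
  · rcases List.append_eq_append_iff.1 ha with ⟨k, rfl, -⟩ | ⟨b, rfl, rfl⟩
    · exact absurd ⟨l, k, by simp⟩ (hu.not_infix hR)
    · exact ⟨l, a, b, r, hR, rfl, rfl, rfl⟩
  · exact absurd ⟨a, r, by simp [ha]⟩ (hv.not_infix hR)

lemma isPrefixProduct_of_eqvGen_append_nil (h1 : (1 : FreeMonoid X) ∉ T) (hT : OverlapFree T)
    {u v : List (X ⊕ T)} (hu : IsNormalForm T u) (hv : IsNormalForm T v)
    (h : EqvGen (Step T) (u ++ v) []) : IsPrefixProduct T u := by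
  induction hn : (u ++ v).length using Nat.strong_induction_on generalizing u v with
  | _ n ih =>
  by_cases hnf : IsNormalForm T (u ++ v)
  · rw [(List.append_eq_nil_iff.1 (hnf.eq_of_eqvGen h1 hT isNormalForm_nil h)).1]
    exact .nil
  obtain ⟨z, hz⟩ := not_forall_not.1 hnf
  obtain ⟨l, m, b, r, hR, rfl, rfl, rfl⟩ := exists_straddling_redex hu hv hz
  have hl := ih _ (hn ▸ hz.length_lt) (hu.infix (List.prefix_append l m).isInfix)
    (hv.infix (List.suffix_append b r).isInfix) ((EqvGen.rel _ _ hz).symm.trans _ _ _ h) rfl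
  exact hl.append hR.isPrefixProduct_left

lemma isSuffixProduct_of_eqvGen_append_nil (h1 : (1 : FreeMonoid X) ∉ T) (hT : OverlapFree T)
    {u v : List (X ⊕ T)} (hu : IsNormalForm T u) (hv : IsNormalForm T v)
    (h : EqvGen (Step T) (v ++ u) []) : IsSuffixProduct T u := by
  induction hn : (v ++ u).length using Nat.strong_induction_on generalizing u v with
  | _ n ih =>
  by_cases hnf : IsNormalForm T (v ++ u)
  · rw [(List.append_eq_nil_iff.1 (hnf.eq_of_eqvGen h1 hT isNormalForm_nil h)).2]
    exact .nil
  obtain ⟨z, hz⟩ := not_forall_not.1 hnf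
  obtain ⟨l, m, b, r, hR, rfl, rfl, rfl⟩ := exists_straddling_redex hv hu hz
  have hr := ih _ (hn ▸ hz.length_lt) (hu.infix (List.suffix_append b r).isInfix)
    (hv.infix (List.prefix_append l m).isInfix) ((EqvGen.rel _ _ hz).symm.trans _ _ _ h) rfl
  exact hR.isSuffixProduct_right.append hr

lemma IsPrefixProduct.ne_embList_append (hT : OverlapFree T) {u : List (X ⊕ T)}
    (hu : IsPrefixProduct T u) {a x t : FreeMonoid X} (ht : t ∈ T) (ha : a ≠ 1) (hx : x ≠ 1)
    (hax : a * x = t) (u' : List (X ⊕ T)) : u ≠ embList x ++ u' := by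
  induction hu generalizing a x with
  | nil => exact fun h => hx (embList_eq_nil.1 (List.append_eq_nil_iff.1 h.symm).1)
  | inr s _ _ => exact fun h => hx (embList_append_eq_inr_cons h.symm).1
  | embList_append s hp hpq _ ih =>
    intro h
    rcases embList_append_eq_embList_append h with ⟨c, rfl, hc⟩ | ⟨c, rfl, -⟩
    · rcases eq_or_ne c 1 with rfl | hc₁
      · exact ha (hT.eq_one_of_overlap ht s.2 hp (by simpa using hax.symm) hpq.symm).1
      · exact ih (mul_ne_one'.2 (.inl ha)) hc₁ (by rw [mul_assoc, hax]) hc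
    · exact ha (hT.eq_one_of_overlap ht s.2 hx hax.symm (by rw [← hpq, mul_assoc])).1

/-- Overlap-freeness forces each prefix block to be a whole element of `T`. -/
lemma exists_imageWord_eq (hT : OverlapFree T) {u : List (X ⊕ T)} (hp : IsPrefixProduct T u)
    (hs : IsSuffixProduct T u) : ∃ L, imageWord T L = u := by
  induction hp with
  | nil => exact ⟨[], rfl⟩
  | inr t _ ih =>
    generalize he : Sum.inr t :: _ = w at hs
    cases hs with
    | nil => simp at he
    | inr t' hs' =>
      simp only [List.cons.injEq, Sum.inr.injEq] at he
      obtain ⟨rfl, rfl⟩ := he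
      obtain ⟨L, rfl⟩ := ih hs'
      exact ⟨(t, false) :: L, rfl⟩
    | embList_append t' hs' _ _ => exact absurd (embList_append_eq_inr_cons he.symm).1 hs'
  | @embList_append t p q hp hpq u hu ih =>
    generalize he : embList p ++ u = w at hs
    cases hs with
    | nil => exact absurd (embList_eq_nil.1 (List.append_eq_nil_iff.1 he).1) hp
    | inr t' _ => exact absurd (embList_append_eq_inr_cons he).1 hp
    | @embList_append t' q' s hs hqs u' hs' =>
      obtain ⟨rfl, rfl⟩ : p = s ∧ u = u' := by
        rcases embList_append_eq_embList_append he with ⟨c, rfl, rfl⟩ | ⟨c, rfl, rfl⟩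
        · rcases eq_or_ne c 1 with rfl | hc
          · simp
          · exact absurd rfl (hu.ne_embList_append hT t'.2 (mul_ne_one'.2 (.inr hp)) hc
              (by rw [← hqs, mul_assoc]) u')
        · obtain ⟨-, hcq⟩ := hT.eq_one_of_overlap t'.2 t.2 hs hqs.symm (by rw [← hpq, mul_assoc])
          obtain ⟨rfl, -⟩ := mul_eq_one'.1 hcq
          simp
      obtain ⟨rfl, rfl⟩ := hT.eq_one_of_overlap t'.2 t.2 hp hqs.symm hpq.symm
      obtain rfl : t = t' := Subtype.ext (by rw [← hpq, ← hqs, mul_one, one_mul])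
      obtain ⟨L, rfl⟩ := ih hs'
      exact ⟨(t, true) :: L, by simp [letterWord, ← hpq]⟩

lemma exists_isNormalForm_ofWord_eq (x : AdjInv T) :
    ∃ u, IsNormalForm T u ∧ ofWord T u = x := by
  obtain ⟨w, rfl⟩ := (invCon T).mk'_surjective x
  obtain ⟨u, hu, hwu⟩ := exists_isNormalForm (T := T) w.toList
  exact ⟨u, hu, (ofWord_eq_ofWord_iff.2 (EqvGen.reflTransGen_le_eqvGen _ _ _ hwu)).symm⟩

theorem toUnits_surjective (h1 : (1 : FreeMonoid X) ∉ T) (hT : OverlapFree T) :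
    Function.Surjective (toUnits T) := by
  intro μ
  obtain ⟨u, hu, hμ⟩ := exists_isNormalForm_ofWord_eq (μ : AdjInv T)
  obtain ⟨v, hv, hμ'⟩ := exists_isNormalForm_ofWord_eq (↑μ⁻¹ : AdjInv T)
  have huv : EqvGen (Step T) (u ++ v) [] :=
    ofWord_eq_ofWord_iff.1 (by rw [ofWord_append, hμ, hμ', Units.mul_inv, ofWord_nil])
  have hvu : EqvGen (Step T) (v ++ u) [] :=
    ofWord_eq_ofWord_iff.1 (by rw [ofWord_append, hμ, hμ', Units.inv_mul, ofWord_nil])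
  obtain ⟨L, rfl⟩ := exists_imageWord_eq hT (isPrefixProduct_of_eqvGen_append_nil h1 hT hu hv huv)
    (isSuffixProduct_of_eqvGen_append_nil h1 hT hu hv hvu)
  exact ⟨FreeGroup.mk L, Units.ext (by rw [val_toUnits_mk, hμ])⟩

end Surjectivity

/-- the group of units of `⟨X : i(T)⟩` is free on `T`: the homomorphism
from the free group on `T` sending each generator `t` to the image of `t` is an
isomorphism of groups. -/
theorem stmt9 (X : Type*) (T : Set (FreeMonoid X))
    (h1 : (1 : FreeMonoid X) ∉ T) (hT : OverlapFree T) :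
    ∃ φ : FreeGroup T ≃* (AdjInv T)ˣ,
      ∀ t : T, ((φ (FreeGroup.of t) : (AdjInv T)ˣ) : AdjInv T) = natHom T t.1 :=
  ⟨MulEquiv.ofBijective (toUnits T) ⟨toUnits_injective h1 hT, toUnits_surjective h1 hT⟩,
    fun _ => congrArg Units.val FreeGroup.lift_apply_of⟩

end AdjoinInverses
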